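/- Under the extension setup (S a based scheme on Z with closed subset T̃, based morphism i: U → S with iπ: U → S//T̃ an isomorphism, and Condition (*): |t(ui)| = 1 for all u ∈ U and t ∈ T̃), for every u ∈ U the sets T̃'_u = {t ∈ T̃ : t(ui) = {ui}} and T̃''_u = {t ∈ T̃ : (ui)t = {ui}} are closed subsets of S contained in T̃. -/
import Mathlib


/-!
Common framework for association schemes, following the paper
"A new semidirect product for association schemes".
-/

/-- The diagonal relation `1_X` on a set `X`. -/
def diagRel (X : Type) : Set (X × X) := {w | w.1 = w.2}

/-- The transpose `s*` of a relation. -/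
def transp {X : Type} (s : Set (X × X)) : Set (X × X) := Prod.swap '' s

/-- The structure constant `a_{pqr}`: for `(x,y) ∈ r`, the number of `z` with
`(x,z) ∈ p` and `(z,y) ∈ q` (well-defined for elements of a scheme). -/
noncomputable def aC {X : Type} (p q r : Set (X × X)) : ℕ :=
  sSup {n | ∃ w ∈ r, n = Nat.card {z : X // (w.1, z) ∈ p ∧ (z, w.2) ∈ q}}

/-- `S` is an association scheme on `X`. -/
def IsScheme {X : Type} (S : Set (Set (X × X))) : Prop :=
  (∀ s ∈ S, s.Nonempty) ∧
  (∀ w : X × X, ∃! s, s ∈ S ∧ w ∈ s) ∧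
  diagRel X ∈ S ∧
  (∀ s ∈ S, transp s ∈ S) ∧
  (∀ p ∈ S, ∀ q ∈ S, ∀ r ∈ S, ∀ w ∈ r,
    Nat.card {z : X // (w.1, z) ∈ p ∧ (z, w.2) ∈ q} = aC p q r)

/-- Complex product of two relations relative to a scheme `S`:
`pq = {r ∈ S : a_{pqr} > 0}`. -/
noncomputable def cmulS {X : Type} (S : Set (Set (X × X))) (p q : Set (X × X)) :
    Set (Set (X × X)) :=
  {r | r ∈ S ∧ 0 < aC p q r}

/-- Complex product of two subsets of a scheme. -/
noncomputable def setMulS {X : Type} (S : Set (Set (X × X)))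
    (Pp Qq : Set (Set (X × X))) : Set (Set (X × X)) :=
  ⋃ p ∈ Pp, ⋃ q ∈ Qq, cmulS S p q

/-- `T` is a closed subset of the scheme `S` (i.e. `T ⊆ S` and `T*T ⊆ T`). -/
def IsClosedIn {X : Type} (S T : Set (Set (X × X))) : Prop :=
  T ⊆ S ∧ ∀ p ∈ T, ∀ q ∈ T, cmulS S (transp p) q ⊆ T

/-- `T` is a normal subset of the scheme `S` (i.e. `pT = Tp` for all `p ∈ S`). -/
noncomputable def IsNormalIn {X : Type} (S T : Set (Set (X × X))) : Prop :=
  ∀ p ∈ S, setMulS S {p} T = setMulS S T {p}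

/-- `xs = {y : (x,y) ∈ s}`. -/
def pimg {X : Type} (s : Set (X × X)) (x : X) : Set X := {y | (x, y) ∈ s}

/-- The coset `xT` of a (closed) subset `T` of a scheme. -/
def coset {X : Type} (T : Set (Set (X × X))) (x : X) : Set X :=
  {y | ∃ t ∈ T, (x, y) ∈ t}

/-- The set `X/T` of cosets. -/
def cosets {X : Type} (T : Set (Set (X × X))) : Set (Set X) :=
  {C | ∃ x, C = coset T x}

/-- The quotient relation `s^T` on cosets. -/
def quotRel {X : Type} (T : Set (Set (X × X))) (s : Set (X × X)) :
    Set (Set X × Set X) :=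
  {w | ∃ x₁ x₂, w = (coset T x₁, coset T x₂) ∧
    ∃ p ∈ s, p.1 ∈ coset T x₁ ∧ p.2 ∈ coset T x₂}

/-- The relations of the quotient scheme `S//T`. -/
def quotS {X : Type} (S T : Set (Set (X × X))) : Set (Set (Set X × Set X)) :=
  {r | ∃ s ∈ S, r = quotRel T s}

/-- A presentation of a (based) scheme: a set of points inside an ambient type,
a set of relations, and a basepoint. -/
structure Pres (P : Type) where
  pts : Set P
  rels : Set (Set (P × P))
  base : P

/-- A scheme `S` on the whole of `X`, based at `x0`, as a presentation. -/
def fullPres {X : Type} (S : Set (Set (X × X))) (x0 : X) : Pres X :=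
  ⟨Set.univ, S, x0⟩

/-- The quotient scheme `S//T` on `X/T`, based at `x0 T`, as a presentation. -/
def quotPres {X : Type} (S T : Set (Set (X × X))) (x0 : X) : Pres (Set X) :=
  ⟨cosets T, quotS S T, coset T x0⟩

/-- The subscheme of a scheme defined by the coset `xT` of a closed subset `T`,
as a presentation. -/
def subPres {X : Type} (T : Set (Set (X × X))) (x : X) : Pres X :=
  ⟨coset T x, {r | ∃ t ∈ T, r = t ∩ (coset T x ×ˢ coset T x)}, x⟩

/-- `f` is a morphism of schemes between two presentations: it maps points to
points, and pairs lying in the same relation to pairs lying in the same relation. -/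
def IsMorOn {P Q : Type} (A : Pres P) (B : Pres Q) (f : P → Q) : Prop :=
  Set.MapsTo f A.pts B.pts ∧
  ∀ s ∈ A.rels, ∀ w ∈ s, ∀ w' ∈ s,
    ∃ t ∈ B.rels, (f w.1, f w.2) ∈ t ∧ (f w'.1, f w'.2) ∈ t

/-- The induced map on scheme elements sends `s` to `t` (i.e. `s φ_S = t`):
every pair of `s` is mapped into `t`. -/
def elemMapsTo {P Q : Type} (f : P → Q) (s : Set (P × P)) (t : Set (Q × Q)) : Prop :=
  ∀ w ∈ s, (f w.1, f w.2) ∈ t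

/-- `f` is an isomorphism of schemes: a morphism which is bijective on points and
whose induced map on scheme elements is bijective. -/
def IsIsoOn {P Q : Type} (A : Pres P) (B : Pres Q) (f : P → Q) : Prop :=
  IsMorOn A B f ∧ Set.BijOn f A.pts B.pts ∧
  ∀ t ∈ B.rels, ∃! s, s ∈ A.rels ∧ elemMapsTo f s t

/-- A based isomorphism of schemes. -/
def IsBasedIsoOn {P Q : Type} (A : Pres P) (B : Pres Q) (f : P → Q) : Prop :=
  IsIsoOn A B f ∧ f A.base = B.base

/-- A based association scheme on a finite based set. -/
structure BScheme : Type 1 where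
  X : Type
  fin : Fintype X
  base : X
  S : Set (Set (X × X))
  isScheme : IsScheme S

/-- A morphism in the category 𝒞: a normal closed subset on each side together
with a based isomorphism between the corresponding quotient schemes. -/
structure HomC (A B : BScheme) where
  TN : Set (Set (A.X × A.X))
  UN : Set (Set (B.X × B.X))
  TN_cl : IsClosedIn A.S TN
  TN_n : IsNormalIn A.S TN
  UN_cl : IsClosedIn B.S UN
  UN_n : IsNormalIn B.S UN
  f : Set A.X → Set B.X
  iso : IsBasedIsoOn (quotPres A.S TN A.base) (quotPres B.S UN B.base) f

/-- `t^{T_φ} φ̃ = u^{U_φ}`: the induced map on quotient scheme elements sends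
the class of `t` to the class of `u`. -/
def elemRel {A B : BScheme} (φ : HomC A B) (t : Set (A.X × A.X))
    (u : Set (B.X × B.X)) : Prop :=
  elemMapsTo φ.f (quotRel φ.TN t) (quotRel φ.UN u)

/-- The normal closed subset `T_{φψ}` of the composite. -/
def Tcomp {A B C : BScheme} (φ : HomC A B) (ψ : HomC B C) :
    Set (Set (A.X × A.X)) :=
  {t | t ∈ A.S ∧ ∃ u ∈ B.S, elemRel φ t u ∧ elemRel ψ u (diagRel C.X)}

/-- The normal closed subset `V_{φψ}` of the composite. -/
def Vcomp {A B C : BScheme} (φ : HomC A B) (ψ : HomC B C) :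
    Set (Set (C.X × C.X)) :=
  {v | v ∈ C.S ∧ ∃ u ∈ B.S, elemRel φ (diagRel A.X) u ∧ elemRel ψ u v}

/-- `ρ` is a composite of `φ` and `ψ` in the category 𝒞. -/
def IsComposite {A B C : BScheme} (φ : HomC A B) (ψ : HomC B C) (ρ : HomC A C) : Prop :=
  ρ.TN = Tcomp φ ψ ∧ ρ.UN = Vcomp φ ψ ∧
  ∀ (x : A.X) (y : B.X) (z : C.X),
    φ.f (coset φ.TN x) = coset φ.UN y →
    ψ.f (coset ψ.TN y) = coset ψ.UN z →
    ρ.f (coset (Tcomp φ ψ) x) = coset (Vcomp φ ψ) z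

/-- The identity morphism of 𝒞 at `A`: both normal closed subsets are `{1_X}`
and the isomorphism is the identity of `A//{1_X}`. -/
def IsIdHom {A : BScheme} (ι : HomC A A) : Prop :=
  ι.TN = {diagRel A.X} ∧ ι.UN = {diagRel A.X} ∧
  ∀ x : A.X, ι.f (coset {diagRel A.X} x) = coset {diagRel A.X} x

/-- A `τ_T`-scheme on the based set underlying `T`. -/
structure TauSchemeOn (T : BScheme) where
  rels : Set (Set (T.X × T.X))
  isScheme : IsScheme rels
  alpha : Set (T.X × T.X) → Set (T.X × T.X)
  alpha_bij : Set.BijOn alpha T.S rels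
  alpha_one : alpha (diagRel T.X) = diagRel T.X
  alpha_star : ∀ p ∈ T.S, alpha (transp p) = transp (alpha p)
  alpha_const : ∀ p ∈ T.S, ∀ q ∈ T.S, ∀ r ∈ T.S,
    aC p q r = aC (alpha p) (alpha q) (alpha r)

/-- The based scheme underlying a `τ`-scheme. -/
abbrev TauSchemeOn.toB {T : BScheme} (Z : TauSchemeOn T) : BScheme :=
  ⟨T.X, T.fin, T.base, Z.rels, Z.isScheme⟩

/-- An action `ζ` of a based scheme `U` on a based scheme `T`. -/
structure SchemeAction (U T : BScheme) where
  /-- the `τ`-scheme `ζ_y = (T_y, α^y)` for each `y ∈ Y` -/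
  Z : U.X → TauSchemeOn T
  /-- the morphism `ζ_{y₁}^{y₂} ∈ Hom_𝒞(T_{y₁}, T_{y₂})` -/
  hom : ∀ y1 y2 : U.X, HomC (Z y1).toB (Z y2).toB
  /-- (1) `T_{y*} = T` -/
  base_rels : (Z U.base).rels = T.S
  /-- (1) `α^{y*} = id` -/
  base_alpha : ∀ p, (Z U.base).alpha p = p
  /-- (2) `ζ_y^y` is the identity morphism -/
  hom_refl_TN : ∀ y : U.X, (hom y y).TN = {diagRel T.X}
  hom_refl_UN : ∀ y : U.X, (hom y y).UN = {diagRel T.X}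
  hom_refl_f : ∀ (y : U.X) (x : T.X),
    (hom y y).f (coset {diagRel T.X} x) = coset {diagRel T.X} x
  /-- (3) `ζ_{y₂}^{y₁} = (ζ_{y₁}^{y₂})*` -/
  hom_symm_TN : ∀ y1 y2 : U.X, (hom y2 y1).TN = (hom y1 y2).UN
  hom_symm_UN : ∀ y1 y2 : U.X, (hom y2 y1).UN = (hom y1 y2).TN
  hom_symm_f : ∀ y1 y2 : U.X,
    Set.InvOn (hom y2 y1).f (hom y1 y2).f
      (cosets (hom y1 y2).TN) (cosets (hom y1 y2).UN)
  /-- (4) `ζ_{y₁}^{y₂}(τ)` depends only on the element `u ∈ U` containing `(y₁,y₂)` -/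
  zeta_welldef : ∀ u ∈ U.S, ∀ y1 y2 y1' y2' : U.X, (y1, y2) ∈ u → (y1', y2') ∈ u →
    ∀ Pp : Set (Set (T.X × T.X)),
      {u' | u' ∈ T.S ∧ ∃ t ∈ Pp,
        elemRel (hom y1 y2) ((Z y1).alpha t) ((Z y2).alpha u')} =
      {u' | u' ∈ T.S ∧ ∃ t ∈ Pp,
        elemRel (hom y1' y2') ((Z y1').alpha t) ((Z y2').alpha u')}
  /-- (5) `ζ_{y₁}^{y₃} ≤ ζ_{y₁}^{y₂} ζ_{y₂}^{y₃}` -/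
  le_comp : ∀ y1 y2 y3 : U.X,
    (hom y1 y3).TN ⊆ Tcomp (hom y1 y2) (hom y2 y3) ∧
    (hom y1 y3).UN ⊆ Vcomp (hom y1 y2) (hom y2 y3) ∧
    ∀ x x2 x3 : T.X,
      (hom y1 y2).f (coset (hom y1 y2).TN x) = coset (hom y1 y2).UN x2 →
      (hom y2 y3).f (coset (hom y2 y3).TN x2) = coset (hom y2 y3).UN x3 →
      (hom y1 y3).f (coset (hom y1 y3).TN x) ⊆
        coset (Vcomp (hom y1 y2) (hom y2 y3)) x3

/-- The map `ζ_u` on subsets of `τ` induced by any `(y₁,y₂) ∈ u`. -/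
def SchemeAction.zetaU {U T : BScheme} (act : SchemeAction U T)
    (u : Set (U.X × U.X)) (Pp : Set (Set (T.X × T.X))) : Set (Set (T.X × T.X)) :=
  {u' | ∃ y1 y2 : U.X, (y1, y2) ∈ u ∧ u' ∈ T.S ∧
    ∃ t ∈ Pp, elemRel (act.hom y1 y2) ((act.Z y1).alpha t) ((act.Z y2).alpha u')}

/-- The relation `[u,t]` on `Y × X`. -/
def SchemeAction.rel {U T : BScheme} (act : SchemeAction U T)
    (u : Set (U.X × U.X)) (t : Set (T.X × T.X)) :
    Set ((U.X × T.X) × (U.X × T.X)) :=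
  {w | (w.1.1, w.2.1) ∈ u ∧
    ((act.hom w.1.1 w.2.1).f (coset (act.hom w.1.1 w.2.1).TN w.1.2),
      coset (act.hom w.1.1 w.2.1).UN w.2.2) ∈
      quotRel (act.hom w.1.1 w.2.1).UN ((act.Z w.2.1).alpha t)}

/-- The semidirect product `U ⋉_ζ T` as a set of relations on `Y × X`. -/
def SchemeAction.sdp {U T : BScheme} (act : SchemeAction U T) :
    Set (Set ((U.X × T.X) × (U.X × T.X))) :=
  {r | ∃ u ∈ U.S, ∃ t ∈ T.S, r = act.rel u t}

/-- The valency `n_s = a_{s s* 1}` of a relation. -/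
noncomputable def nval {X : Type} (s : Set (X × X)) : ℕ :=
  aC s (transp s) (diagRel X)


section Aux12
variable {X : Type} {S : Set (Set (X × X))}

lemma my_mem_transp {s : Set (X × X)} {x y : X} : (x, y) ∈ transp s ↔ (y, x) ∈ s := by
  constructor
  · rintro ⟨⟨a, b⟩, h, heq⟩
    simp only [Prod.swap_prod_mk, Prod.mk.injEq] at heq
    obtain ⟨rfl, rfl⟩ := heq
    exact h
  · intro h; exact ⟨(y, x), h, rfl⟩

lemma my_transp_transp (s : Set (X × X)) : transp (transp s) = s := by
  ext ⟨x, y⟩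
  rw [my_mem_transp, my_mem_transp]

lemma my_rel_exists (hS : IsScheme S) (w : X × X) : ∃ s ∈ S, w ∈ s := by
  obtain ⟨s, ⟨hs, hw⟩, _⟩ := hS.2.1 w
  exact ⟨s, hs, hw⟩

lemma my_rel_unique (hS : IsScheme S) {s s' : Set (X × X)} (hs : s ∈ S) (hs' : s' ∈ S)
    {w : X × X} (hw : w ∈ s) (hw' : w ∈ s') : s = s' := by
  obtain ⟨r, _, hr⟩ := hS.2.1 w
  rw [hr s ⟨hs, hw⟩, hr s' ⟨hs', hw'⟩]

lemma my_aC_pos (hfin : Finite X) (hS : IsScheme S) {p q r : Set (X × X)}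
    (hp : p ∈ S) (hq : q ∈ S) (hr : r ∈ S) {x y : X} (hw : (x, y) ∈ r) {z : X}
    (h1 : (x, z) ∈ p) (h2 : (z, y) ∈ q) : 0 < aC p q r := by
  have h := hS.2.2.2.2 p hp q hq r hr (x, y) hw
  rw [← h]
  haveI := hfin
  haveI : Nonempty {c : X // (x, c) ∈ p ∧ (c, y) ∈ q} := ⟨⟨z, h1, h2⟩⟩
  exact Nat.card_pos

lemma my_witness (hS : IsScheme S) {p q r : Set (X × X)}
    (hp : p ∈ S) (hq : q ∈ S) (hr : r ∈ S) {x y : X} (hw : (x, y) ∈ r)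
    (hpos : 0 < aC p q r) : ∃ z, (x, z) ∈ p ∧ (z, y) ∈ q := by
  have h := hS.2.2.2.2 p hp q hq r hr (x, y) hw
  have h2 : 0 < Nat.card {z : X // (x, z) ∈ p ∧ (z, y) ∈ q} := h ▸ hpos
  obtain ⟨⟨z, h1, h2⟩⟩ := (Nat.card_pos_iff.mp h2).1
  exact ⟨z, h1, h2⟩

lemma my_exists_pimg (hfin : Finite X) (hS : IsScheme S) {s : Set (X × X)}
    (hs : s ∈ S) (x : X) : ∃ y, (x, y) ∈ s := by
  obtain ⟨⟨a, b⟩, hab⟩ := hS.1 s hs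
  have hd : diagRel X ∈ S := hS.2.2.1
  have hts : transp s ∈ S := hS.2.2.2.1 s hs
  have hpos : 0 < aC s (transp s) (diagRel X) :=
    my_aC_pos hfin hS hs hts hd (show (a, a) ∈ diagRel X from rfl) hab
      (my_mem_transp.mpr hab)
  obtain ⟨z, h1, _⟩ := my_witness hS hs hts hd (show (x, x) ∈ diagRel X from rfl) hpos
  exact ⟨z, h1⟩

lemma my_right_singleton_iff (hfin : Finite X) (hS : IsScheme S) {t m : Set (X × X)}
    (ht : t ∈ S) (hm : m ∈ S) :
    cmulS S t m = {m} ↔ ∀ x z y, (x, z) ∈ t → (z, y) ∈ m → (x, y) ∈ m := by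
  constructor
  · intro hsing x z y hxz hzy
    obtain ⟨s, hs, hw⟩ := my_rel_exists hS (x, y)
    have hpos : 0 < aC t m s := my_aC_pos hfin hS ht hm hs hw hxz hzy
    have hmem : s ∈ cmulS S t m := ⟨hs, hpos⟩
    rw [hsing, Set.mem_singleton_iff] at hmem
    exact hmem ▸ hw
  · intro hpt
    have hmem : m ∈ cmulS S t m := by
      obtain ⟨⟨c, x0⟩, hcx⟩ := hS.1 t ht
      obtain ⟨y0, hy0⟩ := my_exists_pimg hfin hS hm x0
      have h1 : (c, y0) ∈ m := hpt c x0 y0 hcx hy0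
      exact ⟨hm, my_aC_pos hfin hS ht hm hm h1 hcx hy0⟩
    apply Set.eq_singleton_iff_unique_mem.mpr
    refine ⟨hmem, fun s hsmem => ?_⟩
    obtain ⟨hs, hpos⟩ := hsmem
    obtain ⟨⟨x, y⟩, hw⟩ := hS.1 s hs
    obtain ⟨z, h1, h2⟩ := my_witness hS ht hm hs hw hpos
    exact my_rel_unique hS hs hm hw (hpt x z y h1 h2)

lemma my_left_singleton_iff (hfin : Finite X) (hS : IsScheme S) {t m : Set (X × X)}
    (ht : t ∈ S) (hm : m ∈ S) :
    cmulS S m t = {m} ↔ ∀ x z y, (x, z) ∈ m → (z, y) ∈ t → (x, y) ∈ m := by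
  constructor
  · intro hsing x z y hxz hzy
    obtain ⟨s, hs, hw⟩ := my_rel_exists hS (x, y)
    have hpos : 0 < aC m t s := my_aC_pos hfin hS hm ht hs hw hxz hzy
    have hmem : s ∈ cmulS S m t := ⟨hs, hpos⟩
    rw [hsing, Set.mem_singleton_iff] at hmem
    exact hmem ▸ hw
  · intro hpt
    have hmem : m ∈ cmulS S m t := by
      obtain ⟨⟨x0, z0⟩, hxz⟩ := hS.1 m hm
      obtain ⟨y0, hy0⟩ := my_exists_pimg hfin hS ht z0
      have h1 : (x0, y0) ∈ m := hpt x0 z0 y0 hxz hy0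
      exact ⟨hm, my_aC_pos hfin hS hm ht hm h1 hxz hy0⟩
    apply Set.eq_singleton_iff_unique_mem.mpr
    refine ⟨hmem, fun s hsmem => ?_⟩
    obtain ⟨hs, hpos⟩ := hsmem
    obtain ⟨⟨x, y⟩, hw⟩ := hS.1 s hs
    obtain ⟨z, h1, h2⟩ := my_witness hS hm ht hs hw hpos
    exact my_rel_unique hS hs hm hw (hpt x z y h1 h2)

lemma my_transp_mem_closed (hfin : Finite X) (hS : IsScheme S) {T : Set (Set (X × X))}
    (hT : IsClosedIn S T) {p : Set (X × X)} (hp : p ∈ T) : transp p ∈ T := by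
  have hpS : p ∈ S := hT.1 hp
  obtain ⟨⟨a, b⟩, hab⟩ := hS.1 p hpS
  have htp : transp p ∈ S := hS.2.2.2.1 p hpS
  have hd : diagRel X ∈ S := hS.2.2.1
  have hdT : diagRel X ∈ T :=
    hT.2 p hp p hp ⟨hd, my_aC_pos hfin hS htp hpS hd
      (show (b, b) ∈ diagRel X from rfl) (my_mem_transp.mpr hab) hab⟩
  exact hT.2 p hp _ hdT ⟨htp, my_aC_pos hfin hS htp hd htp
    (my_mem_transp.mpr hab) (my_mem_transp.mpr hab) (show (a, a) ∈ diagRel X from rfl)⟩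

end Aux12

theorem stmt12
    (T U Sch : BScheme) (Tt : Set (Set (Sch.X × Sch.X)))
    (hTt : IsClosedIn Sch.S Tt)
    (hsub : ∃ g : Sch.X → T.X,
      IsBasedIsoOn (subPres Tt Sch.base) (fullPres T.S T.base) g)
    (i : U.X → Sch.X)
    (himor : IsMorOn (fullPres U.S U.base) (fullPres Sch.S Sch.base) i)
    (hibase : i U.base = Sch.base)
    (hipi : IsBasedIsoOn (fullPres U.S U.base) (quotPres Sch.S Tt Sch.base)
      (fun y => coset Tt (i y)))
    (iS : Set (U.X × U.X) → Set (Sch.X × Sch.X))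
    (hiS : ∀ u ∈ U.S, iS u ∈ Sch.S ∧ elemMapsTo i u (iS u))
    (hcond : ∀ u ∈ U.S, ∀ t ∈ Tt, ∃! s, s ∈ cmulS Sch.S t (iS u)) :
    ∀ u ∈ U.S,
      (IsClosedIn Sch.S {t | t ∈ Tt ∧ cmulS Sch.S t (iS u) = {iS u}} ∧
        {t | t ∈ Tt ∧ cmulS Sch.S t (iS u) = {iS u}} ⊆ Tt) ∧
      (IsClosedIn Sch.S {t | t ∈ Tt ∧ cmulS Sch.S (iS u) t = {iS u}} ∧
        {t | t ∈ Tt ∧ cmulS Sch.S (iS u) t = {iS u}} ⊆ Tt) := by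
  intro u hu
  have hfin : Finite Sch.X := @Finite.of_fintype _ Sch.fin
  have hS := Sch.isScheme
  have hmS : iS u ∈ Sch.S := (hiS u hu).1
  have keyB : ∀ v ∈ U.S, ∀ p ∈ Tt, cmulS Sch.S p (iS v) = {iS v} →
      cmulS Sch.S (transp p) (iS v) = {iS v} := by
    intro v hv p hpT hsing
    have hmv : iS v ∈ Sch.S := (hiS v hv).1
    have hpS : p ∈ Sch.S := hTt.1 hpT
    have htpS : transp p ∈ Sch.S := hS.2.2.2.1 p hpS
    have hpt := (my_right_singleton_iff hfin hS hpS hmv).mp hsing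
    have htpT : transp p ∈ Tt := my_transp_mem_closed hfin hS hTt hpT
    obtain ⟨s, hs, huniq⟩ := hcond v hv (transp p) htpT
    have hmem : iS v ∈ cmulS Sch.S (transp p) (iS v) := by
      obtain ⟨⟨c, x0⟩, hcx⟩ := hS.1 p hpS
      obtain ⟨y0, hy0⟩ := my_exists_pimg hfin hS hmv x0
      have h1 : (c, y0) ∈ iS v := hpt c x0 y0 hcx hy0
      exact ⟨hmv, my_aC_pos hfin hS htpS hmv hmv hy0 (my_mem_transp.mpr hcx) h1⟩
    apply Set.eq_singleton_iff_unique_mem.mpr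
    exact ⟨hmem, fun s' hs' => (huniq s' hs').trans (huniq (iS v) hmem).symm⟩
  have hvU : transp u ∈ U.S := U.isScheme.2.2.2.1 u hu
  have hmv : iS (transp u) ∈ Sch.S := (hiS (transp u) hvU).1
  have hmveq : iS (transp u) = transp (iS u) := by
    obtain ⟨⟨a, b⟩, hab⟩ := U.isScheme.1 u hu
    have h1 : (i a, i b) ∈ iS u := (hiS u hu).2 (a, b) hab
    have h2 : (i b, i a) ∈ iS (transp u) := (hiS (transp u) hvU).2 (b, a) (my_mem_transp.mpr hab)
    have h3 : (i b, i a) ∈ transp (iS u) := my_mem_transp.mpr h1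
    exact my_rel_unique hS hmv (hS.2.2.2.1 (iS u) hmS) h2 h3
  have keyB' : ∀ p ∈ Tt, cmulS Sch.S (iS u) p = {iS u} →
      cmulS Sch.S (iS u) (transp p) = {iS u} := by
    intro p hpT hsing
    have hpS : p ∈ Sch.S := hTt.1 hpT
    have htpS : transp p ∈ Sch.S := hS.2.2.2.1 p hpS
    have htpT : transp p ∈ Tt := my_transp_mem_closed hfin hS hTt hpT
    have hpt := (my_left_singleton_iff hfin hS hpS hmS).mp hsing
    have h1 : cmulS Sch.S (transp p) (iS (transp u)) = {iS (transp u)} := by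
      apply (my_right_singleton_iff hfin hS htpS hmv).mpr
      intro x z y hxz hzy
      rw [hmveq] at hzy ⊢
      exact my_mem_transp.mpr (hpt y z x (my_mem_transp.mp hzy) (my_mem_transp.mp hxz))
    have h2 := keyB (transp u) hvU (transp p) htpT h1
    rw [my_transp_transp] at h2
    have hpt2 := (my_right_singleton_iff hfin hS hpS hmv).mp h2
    apply (my_left_singleton_iff hfin hS htpS hmS).mpr
    intro x z y hxz hzy
    have hres := hpt2 y z x (my_mem_transp.mp hzy) (by rw [hmveq]; exact my_mem_transp.mpr hxz)
    rw [hmveq] at hres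
    exact my_mem_transp.mp hres
  refine ⟨⟨⟨fun t ht => hTt.1 ht.1, ?_⟩, fun t ht => ht.1⟩,
    ⟨⟨fun t ht => hTt.1 ht.1, ?_⟩, fun t ht => ht.1⟩⟩
  · intro p hp q hq r hr
    obtain ⟨hrS, hrpos⟩ := hr
    have hpS : p ∈ Sch.S := hTt.1 hp.1
    have hqS : q ∈ Sch.S := hTt.1 hq.1
    have htpS : transp p ∈ Sch.S := hS.2.2.2.1 p hpS
    refine ⟨hTt.2 p hp.1 q hq.1 ⟨hrS, hrpos⟩, ?_⟩
    apply (my_right_singleton_iff hfin hS hrS hmS).mpr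
    intro x z y hxz hzy
    obtain ⟨c, hc1, hc2⟩ := my_witness hS htpS hqS hrS hxz hrpos
    have h1 : (c, y) ∈ iS u := (my_right_singleton_iff hfin hS hqS hmS).mp hq.2 c z y hc2 hzy
    exact (my_right_singleton_iff hfin hS htpS hmS).mp (keyB u hu p hp.1 hp.2) x c y hc1 h1
  · intro p hp q hq r hr
    obtain ⟨hrS, hrpos⟩ := hr
    have hpS : p ∈ Sch.S := hTt.1 hp.1
    have hqS : q ∈ Sch.S := hTt.1 hq.1
    have htpS : transp p ∈ Sch.S := hS.2.2.2.1 p hpS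
    refine ⟨hTt.2 p hp.1 q hq.1 ⟨hrS, hrpos⟩, ?_⟩
    apply (my_left_singleton_iff hfin hS hrS hmS).mpr
    intro x z y hxz hzy
    obtain ⟨c, hc1, hc2⟩ := my_witness hS htpS hqS hrS hzy hrpos
    have h1 : (x, c) ∈ iS u := (my_left_singleton_iff hfin hS htpS hmS).mp (keyB' p hp.1 hp.2) x z c hxz hc1
    exact (my_left_singleton_iff hfin hS hqS hmS).mp hq.2 x c y h1 hc2
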